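/- Fix N ∈ ℕ, N ≥ 2, and assume f : [0,1] × ℝ → ℝ satisfies D(f): there exist positive constants A, B with A < 1 such that |f(t,x)| ≤ A|x| + B for all t ∈ [0,1], x ∈ ℝ. Then the functional x ↦ ‖D_N x‖_N on 𝔼_N is coercive with respect to ‖·‖_{𝔼_N}; in fact ‖D_N x‖_N ≥ (1 − A)‖x‖_{𝔼_N} − B/N^{3/2} for every x ∈ 𝔼_N. -/

import Mathlib

/-- The space `𝔼_N` of functions `x : {0,…,N} → ℝ` with `x(0) = x(N) = 0` is identified
with `ℝ^{N−1}` via the interior values `x(1),…,x(N−1)`; `ext N x k` recovers `x(k)` for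
`k ∈ ℤ` (extending by `0` at the boundary and outside `{0,…,N}`).  With this
identification the Euclidean norm of `ℝ^{N−1}` is exactly `‖x‖_N`. -/
noncomputable def ext (N : ℕ) (x : EuclideanSpace ℝ (Fin (N-1))) (k : ℤ) : ℝ :=
  if h : 1 ≤ k ∧ k ≤ (N:ℤ) - 1 then x ⟨(k-1).toNat, by omega⟩ else 0

/-- The operator `D_N : 𝔼_N → 𝔼_N`,
`(D_N x)(k) = Δ²x(k−1) − (1/N²) f(k/N, x(k))` for `k = 1,…,N−1`
(and `0` at `k = 0, N`), written on interior indices `k = i + 1`, `i : Fin (N−1)`. -/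
noncomputable def DN (N : ℕ) (f : ℝ → ℝ → ℝ) (x : EuclideanSpace ℝ (Fin (N-1))) :
    EuclideanSpace ℝ (Fin (N-1)) :=
  WithLp.toLp 2 (fun i : Fin (N-1) => ext N x ((i:ℕ)+2) - 2 * ext N x ((i:ℕ)+1) + ext N x (i:ℕ)
    - (1/(N:ℝ)^2) * f ((((i:ℕ):ℝ)+1)/(N:ℝ)) (ext N x ((i:ℕ)+1)))

/-- `‖x‖_{𝔼_N} = (∑_{k=1}^{N−1} |Δ²x(k−1)|²)^{1/2}` in the identification of `𝔼_N`
with `ℝ^{N−1}` (interior index `k = i+1`). -/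
noncomputable def normEN (N : ℕ) (x : EuclideanSpace ℝ (Fin (N-1))) : ℝ :=
  Real.sqrt (∑ i : Fin (N-1),
    (ext N x ((i:ℕ)+2) - 2 * ext N x ((i:ℕ)+1) + ext N x (i:ℕ))^2)

/-!
Write `D_N x = Δ²x − w(x)`, where `w(x)(k) = N⁻² f(k/N, x(k))`. Summation by parts gives
`‖Δx‖² = −⟨x, Δ²x⟩ ≤ ‖x‖_N ‖x‖_{𝔼_N}`, and since `x(0) = 0` every `x(k)` is a sum of at most `N`
differences, so `‖x‖_N² ≤ N² ‖Δx‖²`; together `‖x‖_N ≤ N² ‖x‖_{𝔼_N}`. The growth bound gives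
`‖w(x)‖_N ≤ (A/N²)‖x‖_N + B√(N−1)/N² ≤ A‖x‖_{𝔼_N} + B/N^{3/2}`, and the reverse triangle inequality
`‖D_N x‖_N ≥ ‖Δ²x‖_N − ‖w(x)‖_N` concludes.
-/

section Sequences

open Finset

theorem sum_sq_sub_eq_neg_sum_mul_secondDiff (v : ℕ → ℝ) (n : ℕ) (h0 : v 0 = 0)
    (hn : v (n + 1) = 0) :
    ∑ k ∈ range (n + 1), (v (k + 1) - v k) ^ 2 =
      -∑ k ∈ range n, v (k + 1) * (v (k + 2) - 2 * v (k + 1) + v k) := by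
  have htel : ∑ k ∈ range n,
      ((v (k + 1) - v k) ^ 2 + v (k + 1) * (v (k + 2) - 2 * v (k + 1) + v k)) = -v n ^ 2 :=
    calc _ = ∑ k ∈ range n, (v (k + 1) * (v (k + 1 + 1) - v (k + 1)) - v k * (v (k + 1) - v k)) :=
          sum_congr rfl fun k _ => by ring
      _ = -v n ^ 2 := by rw [sum_range_sub (fun k => v k * (v (k + 1) - v k)), hn, h0]; ring
  rw [sum_add_distrib] at htel
  rw [sum_range_succ, hn]
  linarith

theorem sum_sq_le_sq_mul_sum_sq_sub (v : ℕ → ℝ) (m : ℕ) (h0 : v 0 = 0) :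
    ∑ k ∈ range m, v (k + 1) ^ 2 ≤ (m : ℝ) ^ 2 * ∑ k ∈ range m, (v (k + 1) - v k) ^ 2 := by
  have hpoint : ∀ k ∈ range m, v (k + 1) ^ 2 ≤ m * ∑ j ∈ range m, (v (j + 1) - v j) ^ 2 := by
    intro k hk
    have hk : k + 1 ≤ m := mem_range.1 hk
    have hsum : v (k + 1) = ∑ j ∈ range (k + 1), (v (j + 1) - v j) := by
      rw [sum_range_sub, h0, sub_zero]
    rw [hsum]
    calc (∑ j ∈ range (k + 1), (v (j + 1) - v j)) ^ 2
        ≤ (k + 1 : ℕ) * ∑ j ∈ range (k + 1), (v (j + 1) - v j) ^ 2 := by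
          simpa using
            sq_sum_le_card_mul_sum_sq (s := range (k + 1)) (f := fun j => v (j + 1) - v j)
      _ ≤ m * ∑ j ∈ range m, (v (j + 1) - v j) ^ 2 := by gcongr
  calc ∑ k ∈ range m, v (k + 1) ^ 2
        ≤ ∑ _k ∈ range m, m * ∑ j ∈ range m, (v (j + 1) - v j) ^ 2 := sum_le_sum hpoint
    _ = _ := by rw [sum_const, card_range, nsmul_eq_mul]; ring

theorem sqrt_sum_sq_le_sq_mul_sqrt_sum_sq_secondDiff (v : ℕ → ℝ) (n : ℕ) (h0 : v 0 = 0)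
    (hn : v (n + 1) = 0) :
    √(∑ k ∈ range n, v (k + 1) ^ 2) ≤
      ((n : ℝ) + 1) ^ 2 * √(∑ k ∈ range n, (v (k + 2) - 2 * v (k + 1) + v k) ^ 2) := by
  set X := ∑ k ∈ range n, v (k + 1) ^ 2
  set Z := ∑ k ∈ range n, (v (k + 2) - 2 * v (k + 1) + v k) ^ 2
  set D := ∑ k ∈ range (n + 1), (v (k + 1) - v k) ^ 2
  have hX : X ≤ ((n : ℝ) + 1) ^ 2 * D :=
    calc X ≤ ∑ k ∈ range (n + 1), v (k + 1) ^ 2 :=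
          sum_le_sum_of_subset_of_nonneg (range_subset_range.2 n.le_succ) fun _ _ _ => sq_nonneg _
      _ ≤ _ := by exact_mod_cast sum_sq_le_sq_mul_sum_sq_sub v (n + 1) h0
  have hD : D ≤ √X * √Z :=
    calc D = -∑ k ∈ range n, v (k + 1) * (v (k + 2) - 2 * v (k + 1) + v k) :=
          sum_sq_sub_eq_neg_sum_mul_secondDiff v n h0 hn
      _ = ∑ k ∈ range n, -v (k + 1) * (v (k + 2) - 2 * v (k + 1) + v k) := by
          simp only [neg_mul, sum_neg_distrib]
      _ ≤ √(∑ k ∈ range n, (-v (k + 1)) ^ 2) * √Z := Real.sum_mul_le_sqrt_mul_sqrt _ _ _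
      _ = √X * √Z := by simp only [neg_sq, X]
  have hXnn : 0 ≤ X := sum_nonneg fun _ _ => sq_nonneg _
  have hsq : √X * √X ≤ √X * (((n : ℝ) + 1) ^ 2 * √Z) := by
    rw [Real.mul_self_sqrt hXnn]
    nlinarith [Real.sqrt_nonneg X, Real.sqrt_nonneg Z]
  rcases (Real.sqrt_nonneg X).eq_or_lt with h | h
  · rw [← h]; positivity
  · exact le_of_mul_le_mul_left hsq h

end Sequences

theorem EuclideanSpace.norm_le_mul_norm_add_mul_sqrt_card {ι : Type*} [Fintype ι] {a b : ℝ}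
    (ha : 0 ≤ a) (hb : 0 ≤ b) {x w : EuclideanSpace ℝ ι} (h : ∀ i, |w i| ≤ a * |x i| + b) :
    ‖w‖ ≤ a * ‖x‖ + b * √(Fintype.card ι) := by
  let p : EuclideanSpace ℝ ι := WithLp.toLp 2 fun i => a * |x i|
  let q : EuclideanSpace ℝ ι := WithLp.toLp 2 fun _ => b
  have hwpq : ‖w‖ ≤ ‖p + q‖ := by
    simp only [EuclideanSpace.norm_eq, Real.norm_eq_abs, sq_abs]
    refine Real.sqrt_le_sqrt (Finset.sum_le_sum fun i _ => ?_)
    have hpq : 0 ≤ p i + q i := by simp only [p, q]; positivity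
    rw [PiLp.add_apply]
    exact sq_le_sq.2 ((h i).trans_eq (abs_of_nonneg hpq).symm)
  have hp : ‖p‖ = a * ‖x‖ := by
    simp only [p, EuclideanSpace.norm_eq, Real.norm_eq_abs, mul_pow, sq_abs,
      ← Finset.mul_sum, Real.sqrt_mul (sq_nonneg a), Real.sqrt_sq ha]
  have hq : ‖q‖ = b * √(Fintype.card ι) := by
    simp only [q, EuclideanSpace.norm_eq, Real.norm_eq_abs, sq_abs, Finset.sum_const,
      Finset.card_univ, nsmul_eq_mul]
    rw [Real.sqrt_mul' _ (sq_nonneg b), Real.sqrt_sq hb, mul_comm]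
  calc ‖w‖ ≤ ‖p + q‖ := hwpq
    _ ≤ ‖p‖ + ‖q‖ := norm_add_le p q
    _ = _ := by rw [hp, hq]

section SecondDifference

variable {N : ℕ} (x : EuclideanSpace ℝ (Fin (N - 1)))

theorem ext_zero : ext N x 0 = 0 := by
  simp [ext]

theorem ext_natCast_self : ext N x N = 0 := by
  rw [ext, dif_neg (by omega)]

theorem ext_natCast_add_one (i : Fin (N - 1)) : ext N x ((i : ℕ) + 1) = x i := by
  rw [ext, dif_pos (by omega)]
  simp

noncomputable def secondDiff (N : ℕ) (x : EuclideanSpace ℝ (Fin (N - 1))) :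
    EuclideanSpace ℝ (Fin (N - 1)) :=
  WithLp.toLp 2 fun i => ext N x ((i : ℕ) + 2) - 2 * ext N x ((i : ℕ) + 1) + ext N x (i : ℕ)

noncomputable def nemytskii (N : ℕ) (f : ℝ → ℝ → ℝ) (x : EuclideanSpace ℝ (Fin (N - 1))) :
    EuclideanSpace ℝ (Fin (N - 1)) :=
  WithLp.toLp 2 fun i => (1 / (N : ℝ) ^ 2) * f ((((i : ℕ) : ℝ) + 1) / N) (ext N x ((i : ℕ) + 1))

theorem DN_eq_secondDiff_sub_nemytskii (f : ℝ → ℝ → ℝ) :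
    DN N f x = secondDiff N x - nemytskii N f x := rfl

theorem normEN_eq_norm_secondDiff : normEN N x = ‖secondDiff N x‖ := by
  simp only [normEN, secondDiff, EuclideanSpace.norm_eq, Real.norm_eq_abs, sq_abs]

theorem norm_le_sq_mul_normEN (hN : 0 < N) : ‖x‖ ≤ (N : ℝ) ^ 2 * normEN N x := by
  obtain ⟨n, rfl⟩ := Nat.exists_eq_add_one_of_ne_zero hN.ne'
  have h := sqrt_sum_sq_le_sq_mul_sqrt_sum_sq_secondDiff (fun k : ℕ => ext (n + 1) x k) n
    (ext_zero x) (ext_natCast_self x)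
  rw [normEN, EuclideanSpace.norm_eq]
  simp only [Real.norm_eq_abs, sq_abs, ← ext_natCast_add_one x]
  simpa [Finset.sum_range] using h

end SecondDifference

theorem div_sq_mul_sqrt_eq_div_rpow (B : ℝ) {N : ℝ} (hN : 0 < N) :
    B / N ^ 2 * √N = B / N ^ ((3 : ℝ) / 2) := by
  have h : N ^ ((3 : ℝ) / 2) * √N = N ^ 2 := by
    rw [Real.sqrt_eq_rpow, ← Real.rpow_add hN, ← Real.rpow_natCast]
    norm_num
  rw [← h]
  field_simp

theorem norm_nemytskii_le {N : ℕ} (hN : 0 < N) (x : EuclideanSpace ℝ (Fin (N - 1)))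
    {f : ℝ → ℝ → ℝ} {A B : ℝ} (hA : 0 ≤ A) (hB : 0 ≤ B)
    (hgrowth : ∀ t ∈ Set.Icc (0 : ℝ) 1, ∀ z : ℝ, |f t z| ≤ A * |z| + B) :
    ‖nemytskii N f x‖ ≤ A / (N : ℝ) ^ 2 * ‖x‖ + B / (N : ℝ) ^ ((3 : ℝ) / 2) := by
  have hNR : (0 : ℝ) < N := by exact_mod_cast hN
  have hpoint (i : Fin (N - 1)) :
      |nemytskii N f x i| ≤ A / (N : ℝ) ^ 2 * |x i| + B / (N : ℝ) ^ 2 := by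
    have ht : (((i : ℕ) : ℝ) + 1) / N ∈ Set.Icc (0 : ℝ) 1 := by
      refine ⟨by positivity, (div_le_one hNR).2 ?_⟩
      exact_mod_cast (show (i : ℕ) + 1 ≤ N by omega)
    calc |nemytskii N f x i| = 1 / (N : ℝ) ^ 2 * |f ((((i : ℕ) : ℝ) + 1) / N) (x i)| := by
          rw [nemytskii, PiLp.toLp_apply, ext_natCast_add_one, abs_mul, abs_of_pos (by positivity)]
      _ ≤ 1 / (N : ℝ) ^ 2 * (A * |x i| + B) := by gcongr; exact hgrowth _ ht _
      _ = _ := by ring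
  calc ‖nemytskii N f x‖
        ≤ A / (N : ℝ) ^ 2 * ‖x‖ + B / (N : ℝ) ^ 2 * √(Fintype.card (Fin (N - 1))) :=
        EuclideanSpace.norm_le_mul_norm_add_mul_sqrt_card (by positivity) (by positivity) hpoint
    _ ≤ A / (N : ℝ) ^ 2 * ‖x‖ + B / (N : ℝ) ^ 2 * √N := by
        gcongr
        rw [Fintype.card_fin]
        exact_mod_cast N.sub_le 1
    _ = _ := by rw [div_sq_mul_sqrt_eq_div_rpow B hNR]

theorem one_sub_mul_normEN_sub_le_norm_DN {N : ℕ} (hN : 0 < N)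
    (x : EuclideanSpace ℝ (Fin (N - 1)))
    {f : ℝ → ℝ → ℝ} {A B : ℝ} (hA : 0 ≤ A) (hB : 0 ≤ B)
    (hgrowth : ∀ t ∈ Set.Icc (0 : ℝ) 1, ∀ z : ℝ, |f t z| ≤ A * |z| + B) :
    (1 - A) * normEN N x - B / (N : ℝ) ^ ((3 : ℝ) / 2) ≤ ‖DN N f x‖ := by
  have hx : A / (N : ℝ) ^ 2 * ‖x‖ ≤ A * normEN N x :=
    calc A / (N : ℝ) ^ 2 * ‖x‖ ≤ A / (N : ℝ) ^ 2 * ((N : ℝ) ^ 2 * normEN N x) := by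
          gcongr; exact norm_le_sq_mul_normEN x hN
      _ = A * normEN N x := by field_simp
  have hw := norm_nemytskii_le hN x hA hB hgrowth
  have hDN : ‖secondDiff N x‖ - ‖nemytskii N f x‖ ≤ ‖DN N f x‖ := by
    rw [DN_eq_secondDiff_sub_nemytskii]
    exact norm_sub_norm_le _ _
  rw [normEN_eq_norm_secondDiff] at hx ⊢
  linarith

/-- Under D(f) (`|f(t,x)| ≤ A|x| + B` with `0 < A < 1`, `0 < B`), the functional
`x ↦ ‖D_N x‖_N` is coercive on `(𝔼_N, ‖·‖_{𝔼_N})`; in fact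
`‖D_N x‖_N ≥ (1 − A)‖x‖_{𝔼_N} − B/N^{3/2}` for every `x ∈ 𝔼_N`.
(The Euclidean norm `‖D_N x‖` is exactly `‖D_N x‖_N`.) -/
theorem DN_norm_coercive
    (N : ℕ) (hN : 2 ≤ N) (f : ℝ → ℝ → ℝ)
    (A B : ℝ) (hA : 0 < A) (hB : 0 < B) (hAlt : A < 1)
    (hgrowth : ∀ t ∈ Set.Icc (0:ℝ) 1, ∀ z : ℝ, |f t z| ≤ A * |z| + B) :
    (∀ M : ℝ, ∃ R : ℝ, ∀ x : EuclideanSpace ℝ (Fin (N-1)),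
        R ≤ normEN N x → M ≤ ‖DN N f x‖) ∧
    ∀ x : EuclideanSpace ℝ (Fin (N-1)),
      (1 - A) * normEN N x - B / (N:ℝ)^((3:ℝ)/2) ≤ ‖DN N f x‖ := by
  have hlower x := one_sub_mul_normEN_sub_le_norm_DN (by omega : 0 < N) x hA.le hB.le hgrowth
  refine ⟨fun M => ⟨(M + B / (N : ℝ) ^ ((3 : ℝ) / 2)) / (1 - A), fun x hx => ?_⟩, hlower⟩
  have := (div_le_iff₀' (sub_pos.2 hAlt)).1 hx
  linarith [hlower x]
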